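/- arXiv:1610.04147 — 3 statements merged into one kernel-verified Lean document; each statement's English description precedes it below -/
import Mathlib

section
/- Let μ : [-r₀, t*] → ℝ be C¹ with μ(-r₀) close to 1, satisfying the expansion μ(s) = 1 - (1/s + 1/r₀) r₀² μ'(-r₀) + E(s) where |E(s)| ≤ ε ≤ 1/100, for all s ∈ [-r₀, t*] with t* ≤ -1. If at some time t we have μ(t) < 1/10, then necessarily r₀² μ'(-r₀) < 0 and moreover (1/t + 1/r₀) r₀² μ'(-r₀) ≥ 1/2; consequently r₀² μ'(-r₀) ≤ (1/2) · t r₀/(r₀ + t) < 0. -/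
/-! Write `c = 1/t + 1/r₀`. Since `-r₀ ≤ t < 0` we have `c ≤ 0`, while the expansion at `t`
together with `μ(t) < 1/10` and `|E(t)| ≤ 1/100` gives `c m ≥ 9/10 - 1/100 > 1/2`. Hence
`c < 0` and `m < 0`, and dividing by `c` yields `m ≤ 1/(2c)`, where `1/c = t r₀/(r₀ + t)`. -/

lemma one_div_add_one_div_nonpos {α : Type*} [Field α] [LinearOrder α] [IsStrictOrderedRing α]
    {r t : α} (hrt : -r ≤ t) (ht : t < 0) : 1 / t + 1 / r ≤ 0 := by
  have h := one_div_le_one_div_of_neg_of_le ht hrt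
  rw [one_div_neg_eq_neg_one_div] at h
  linarith

lemma mul_div_add_eq_inv_one_div_add_one_div {K : Type*} [Field K] {r t : K} (hr : r ≠ 0)
    (ht : t ≠ 0) : t * r / (r + t) = (1 / t + 1 / r)⁻¹ := by
  rw [one_div_add_one_div ht hr, inv_div, add_comm]

theorem shock_region_initial_Lb_mu_general
    (r₀ tstar ε m : ℝ) (μ E : ℝ → ℝ)
    (hr : 0 < r₀) (hts : tstar ≤ -1)
    (hε : ε ≤ 1/100)
    (hexp : ∀ s ∈ Set.Icc (-r₀) tstar, μ s = 1 - (1/s + 1/r₀) * m + E s)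
    (hE : ∀ s ∈ Set.Icc (-r₀) tstar, |E s| ≤ ε) :
    ∀ t ∈ Set.Icc (-r₀) tstar, μ t < 1/10 →
      m < 0 ∧ 1/2 ≤ (1/t + 1/r₀) * m ∧
      m ≤ 1/2 * (t * r₀ / (r₀ + t)) ∧ t * r₀ / (r₀ + t) < 0 := by
  intro t ht hμt
  have ht_neg : t < 0 := by linarith [ht.2]
  have hcm : 1 / 2 ≤ (1 / t + 1 / r₀) * m := by
    have hEt := (abs_le.mp (hE t ht)).1
    rw [hexp t ht] at hμt
    linarith
  have hc : 1 / t + 1 / r₀ < 0 := by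
    refine (one_div_add_one_div_nonpos ht.1 ht_neg).lt_of_ne fun h => ?_
    rw [h, zero_mul] at hcm
    norm_num at hcm
  have hm : m < 0 := neg_of_mul_pos_right (by linarith) hc.le
  rw [mul_div_add_eq_inv_one_div_add_one_div hr.ne' ht_neg.ne]
  refine ⟨hm, hcm, ?_, inv_lt_zero.mpr hc⟩
  rw [← div_eq_mul_inv, le_div_iff_of_neg hc, mul_comm]
  exact hcm

/-- **The shock region forces a negative initial transversal derivative of `μ`.**
Suppose `μ(s) = 1 - (1/s + 1/r₀) m + E(s)` on `[-r₀, t*]` with `|E| ≤ ε ≤ 1/100`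
and `t* ≤ -1`, where `m = r₀² μ'(-r₀)`.  If `μ(t) < 1/10` at some `t`, then
`m < 0`, `(1/t + 1/r₀) m ≥ 1/2`, and consequently
`m ≤ (1/2) t r₀/(r₀ + t) < 0`. -/
theorem shock_region_initial_Lb_mu
    (r₀ tstar ε m : ℝ) (μ E : ℝ → ℝ)
    (hr : 0 < r₀) (hts : tstar ≤ -1) (hrt : -r₀ ≤ tstar)
    (hε0 : 0 ≤ ε) (hε : ε ≤ 1/100)
    (hexp : ∀ s ∈ Set.Icc (-r₀) tstar, μ s = 1 - (1/s + 1/r₀) * m + E s)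
    (hE : ∀ s ∈ Set.Icc (-r₀) tstar, |E s| ≤ ε) :
    ∀ t ∈ Set.Icc (-r₀) tstar, μ t < 1/10 →
      m < 0 ∧ 1/2 ≤ (1/t + 1/r₀) * m ∧
      m ≤ 1/2 * (t * r₀ / (r₀ + t)) ∧ t * r₀ / (r₀ + t) < 0 :=
  shock_region_initial_Lb_mu_general r₀ tstar ε m μ E hr hts hε hexp hE
end

section
/- Suppose μ : [t₀, t*] → (0, ∞) satisfies, for all t₀ ≤ t < s < t*, the two-sided bounds μ(s) + (η - 1/(2a))(1/t - 1/s) ≤ μ(t) ≤ μ(s) + (η + 1/(2a))(1/t - 1/s), where η ≥ 1, a ≥ 4, and t₀ < t* ≤ -1 < 0. Let M(t) be such that -μ'(t)/μ(t) ≤ M(t) pointwise on the region where μ is decreasing. Then the integral I_a(t) = ∫_{t₀}^{t} μ(τ)^{-a-1} (-τ)^{-2} dτ ≤ C a^{-1} μ(t)^{-a} for an absolute constant C independent of a. -/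
/-!
On `[t₀, t]` the lower bound gives `μ(τ) ≥ μ(t) + c (1/τ - 1/t)` with `c = η - 1/(2a) ≥ 7/8`, so the
integrand is dominated by that of this barrier, which has the explicit primitive
`(c a)⁻¹ (μ(t) + c (1/τ - 1/t))^{-a}` (substitute `σ = 1/τ`). Dropping its nonnegative value at
`t₀` gives the bound with `C = 2`, since `(c a)⁻¹ ≤ 2 a⁻¹`.
-/

open Set intervalIntegral

namespace intervalIntegral

theorem integral_mono_on_of_nonneg {f g : ℝ → ℝ} {a b : ℝ} (hab : a ≤ b)
    (hg : IntervalIntegrable g MeasureTheory.volume a b) (hf : ∀ x ∈ Icc a b, 0 ≤ f x)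
    (hfg : ∀ x ∈ Icc a b, f x ≤ g x) :
    ∫ x in a..b, f x ≤ ∫ x in a..b, g x := by
  by_cases hfi : IntervalIntegrable f MeasureTheory.volume a b
  · exact integral_mono_on hab hfi hg hfg
  · rw [integral_undef hfi]
    exact integral_nonneg hab fun x hx ↦ (hf x hx).trans (hfg x hx)

end intervalIntegral

section InversePower

variable {b c p : ℝ}

theorem hasDerivAt_rpow_add_mul_inv {τ : ℝ} (hτ : τ ≠ 0) (hbase : b + c * τ⁻¹ ≠ 0) :
    HasDerivAt (fun x ↦ (b + c * x⁻¹) ^ (-p))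
      (c * p * ((b + c * τ⁻¹) ^ (-(p + 1)) * (τ ^ 2)⁻¹)) τ := by
  have hinner : HasDerivAt (fun x ↦ b + c * x⁻¹) (c * -(τ ^ 2)⁻¹) τ :=
    ((hasDerivAt_inv hτ).const_mul c).const_add b
  convert hinner.rpow_const (p := -p) (Or.inl hbase) using 1
  rw [show -p - 1 = -(p + 1) by ring]
  ring

theorem continuousOn_rpow_add_mul_inv_mul_inv_sq {s : Set ℝ}
    (h : ∀ τ ∈ s, τ ≠ 0 ∧ b + c * τ⁻¹ ≠ 0) :
    ContinuousOn (fun τ ↦ (b + c * τ⁻¹) ^ (-(p + 1)) * (τ ^ 2)⁻¹) s := by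
  intro τ hτ
  have hinv : ContinuousWithinAt (·⁻¹) s τ := (continuousAt_inv₀ (h τ hτ).1).continuousWithinAt
  exact (((hinv.const_mul c).const_add b).rpow_const (Or.inl (h τ hτ).2)).mul
    ((continuousWithinAt_id.pow 2).inv₀ (pow_ne_zero 2 (h τ hτ).1))

theorem mul_integral_rpow_add_mul_inv_mul_inv_sq {t₀ t : ℝ}
    (h : ∀ τ ∈ uIcc t₀ t, τ ≠ 0 ∧ b + c * τ⁻¹ ≠ 0) :
    c * p * ∫ τ in t₀..t, (b + c * τ⁻¹) ^ (-(p + 1)) * (τ ^ 2)⁻¹ =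
      (b + c * t⁻¹) ^ (-p) - (b + c * t₀⁻¹) ^ (-p) := by
  rw [← integral_const_mul]
  exact integral_eq_sub_of_hasDerivAt
    (fun τ hτ ↦ hasDerivAt_rpow_add_mul_inv (h τ hτ).1 (h τ hτ).2)
    ((continuousOn_rpow_add_mul_inv_mul_inv_sq h).const_mul _).intervalIntegrable

theorem integral_rpow_mul_inv_sq_le_of_le_add_mul_inv_sub {f : ℝ → ℝ} {t₀ t : ℝ}
    (hc : 0 < c) (hp : 0 < p) (ht₀ : t₀ ≤ t) (ht : t < 0) (hft : 0 < f t)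
    (hf : ∀ τ ∈ Icc t₀ t, f t + c * (τ⁻¹ - t⁻¹) ≤ f τ) :
    ∫ τ in t₀..t, f τ ^ (-(p + 1)) * (τ ^ 2)⁻¹ ≤ (c * p)⁻¹ * f t ^ (-p) := by
  set b := f t - c * t⁻¹
  have hbarrier : ∀ τ ∈ Icc t₀ t, f t ≤ b + c * τ⁻¹ ∧ b + c * τ⁻¹ ≤ f τ := fun τ hτ ↦ by
    have hinv : t⁻¹ ≤ τ⁻¹ := (inv_le_inv_of_neg ht (by linarith [hτ.2])).2 hτ.2
    constructor <;> nlinarith [hf τ hτ]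
  have hpos : ∀ τ ∈ Icc t₀ t, 0 < b + c * τ⁻¹ := fun τ hτ ↦ hft.trans_le (hbarrier τ hτ).1
  have hnonzero : ∀ τ ∈ Icc t₀ t, τ ≠ 0 ∧ b + c * τ⁻¹ ≠ 0 := fun τ hτ ↦
    ⟨by linarith [hτ.2], (hpos τ hτ).ne'⟩
  have hprimitive := mul_integral_rpow_add_mul_inv_mul_inv_sq (p := p)
    (by rwa [uIcc_of_le ht₀])
  calc ∫ τ in t₀..t, f τ ^ (-(p + 1)) * (τ ^ 2)⁻¹
      ≤ ∫ τ in t₀..t, (b + c * τ⁻¹) ^ (-(p + 1)) * (τ ^ 2)⁻¹ := by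
        refine integral_mono_on_of_nonneg ht₀ (ContinuousOn.intervalIntegrable_of_Icc ht₀
          (continuousOn_rpow_add_mul_inv_mul_inv_sq hnonzero))
          (fun τ hτ ↦ by have := hpos τ hτ |>.trans_le (hbarrier τ hτ).2; positivity)
          fun τ hτ ↦ ?_
        gcongr ?_ * _
        exact Real.rpow_le_rpow_of_nonpos (hpos τ hτ) (hbarrier τ hτ).2 (by linarith)
    _ = (c * p)⁻¹ * ((b + c * t⁻¹) ^ (-p) - (b + c * t₀⁻¹) ^ (-p)) := by
        rw [← hprimitive, inv_mul_cancel_left₀ (by positivity)]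
    _ ≤ (c * p)⁻¹ * f t ^ (-p) := by
        have hb : b + c * t⁻¹ = f t := sub_add_cancel _ _
        gcongr
        rw [hb]
        exact sub_le_self _ (Real.rpow_nonneg (hpos t₀ ⟨le_rfl, ht₀⟩).le _)

end InversePower

/-- **Key lemma on powers of the inverse foliation density (Lemma 7.1(1)).**
If `μ` satisfies the two-sided bounds
`μ(s) + (η - 1/(2a))(1/t - 1/s) ≤ μ(t) ≤ μ(s) + (η + 1/(2a))(1/t - 1/s)`
for `t₀ ≤ t < s < t* ≤ -1`, with `η ≥ 1` and `a ≥ 4`, then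
`∫_{t₀}^{t} μ(τ)^{-a-1} (-τ)⁻² dτ ≤ C a⁻¹ μ(t)^{-a}` for an absolute constant `C`. -/
theorem mu_power_integral_bound :
    ∃ C : ℝ, 0 < C ∧
      ∀ (a η t₀ tstar : ℝ) (μ : ℝ → ℝ),
        4 ≤ a → 1 ≤ η → t₀ < tstar → tstar ≤ -1 →
        (∀ t, 0 < μ t) →
        (∀ t s, t₀ ≤ t → t < s → s < tstar →
          μ s + (η - 1/(2*a)) * (1/t - 1/s) ≤ μ t ∧
          μ t ≤ μ s + (η + 1/(2*a)) * (1/t - 1/s)) →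
        ∀ t ∈ Set.Ico t₀ tstar,
          (∫ τ in t₀..t, (μ τ) ^ (-(a + 1)) * ((-τ) ^ 2)⁻¹) ≤
            C * a⁻¹ * (μ t) ^ (-a) := by
  refine ⟨2, two_pos, ?_⟩
  intro a η t₀ tstar μ ha hη _ htstar hμ hbound t ⟨ht₀, ht⟩
  have hc : 1 / 2 ≤ η - 1 / (2 * a) := by
    have : 1 / (2 * a) ≤ 1 / 8 := one_div_le_one_div_of_le (by norm_num) (by linarith)
    linarith
  have hbarrier : ∀ τ ∈ Icc t₀ t, μ t + (η - 1 / (2 * a)) * (τ⁻¹ - t⁻¹) ≤ μ τ := by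
    rintro τ ⟨hτ₀, hτt⟩
    rcases hτt.eq_or_lt with rfl | hτt
    · simp
    · simpa only [one_div] using (hbound τ t hτ₀ hτt ht).1
  simp only [neg_sq]
  calc _ ≤ ((η - 1 / (2 * a)) * a)⁻¹ * μ t ^ (-a) :=
        integral_rpow_mul_inv_sq_le_of_le_add_mul_inv_sub (by linarith) (by linarith) ht₀
          (by linarith) (hμ t) hbarrier
    _ ≤ 2 * a⁻¹ * μ t ^ (-a) := by
        have hc_inv : (η - 1 / (2 * a))⁻¹ ≤ 2 := by
          rw [inv_le_comm₀ (by linarith) two_pos]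
          linarith
        rw [mul_inv]
        gcongr
        exact Real.rpow_nonneg (hμ t).le _
end

section
/- Suppose nonnegative continuous functions E, Ē, F̄, K on [-r₀, t] × [0, δ] satisfy: Ē(t,u) + F̄(t,u) + K(t,u) ≤ D̄ + A + C δ² ∫_{-r₀}^{t} (-t')^{-2} E(t',u) dt', and E(t,u) + F(t,u) ≤ D + δ^{-1} D̄ + δ^{-1} A + B, where A = sup_{t'≤t} |∫ ρ (K₁ψ - tψ)| and B = |∫ ρ K₀ψ| are given nonnegative quantities and D, D̄ ≥ 0 are data constants. Then E(t,u) ≤ C'(D + δ^{-1}D̄ + δ^{-1}A + B) and Ē(t,u) + F̄(t,u) + K(t,u) ≤ C'(D̄ + δ²D + A + δ²B) for an absolute constant C'. -/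
/-!
The second inequality alone bounds `E` uniformly by `M = D + δ⁻¹ D̄ + δ⁻¹ A + B`. The weight
`(-t')⁻²` has total mass at most `1` on `(-∞, -1]`, so the coupling term in the first inequality
is at most `C δ² M`, and `δ² M ≤ D̄ + A + δ² (D + B)` because `δ ≤ 1`. No quantity depends on `r₀`.
-/

open intervalIntegral Set
open scoped Interval

theorem integral_inv_neg_sq_of_neg {a b : ℝ} (ha : a < 0) (hb : b < 0) :
    ∫ x in a..b, ((-x) ^ 2)⁻¹ = a⁻¹ - b⁻¹ := by
  have h := integral_zpow (a := a) (b := b) (n := -2)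
    (Or.inr ⟨by norm_num, notMem_uIcc_of_gt ha hb⟩)
  rw [integral_congr fun x _ => show ((-x) ^ 2)⁻¹ = x ^ (-2 : ℤ) by simp [zpow_neg], h]
  norm_num [zpow_neg]
  ring

theorem integral_inv_neg_sq_mul_le {a b M : ℝ} {f : ℝ → ℝ} (hab : a ≤ b) (hb : b ≤ -1)
    (hf : ContinuousOn f (Icc a b)) (hfM : ∀ x ∈ Icc a b, f x ≤ M) (hM : 0 ≤ M) :
    ∫ x in a..b, ((-x) ^ 2)⁻¹ * f x ≤ M := by
  have hneg : ∀ x ∈ Icc a b, x < 0 := fun x hx => by linarith [hx.2]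
  have hw : ContinuousOn (fun x : ℝ => ((-x) ^ 2)⁻¹) (Icc a b) :=
    (continuousOn_neg.pow 2).inv₀ fun x hx => by simpa using (hneg x hx).ne
  have hwM : ∫ x in a..b, ((-x) ^ 2)⁻¹ * f x ≤ ∫ x in a..b, ((-x) ^ 2)⁻¹ * M := by
    refine integral_mono_on hab ?_ ?_ fun x hx => ?_
    · exact ((hw.mul hf).mono (uIcc_of_le hab).subset).intervalIntegrable
    · exact ((hw.mul continuousOn_const).mono (uIcc_of_le hab).subset).intervalIntegrable
    · exact mul_le_mul_of_nonneg_left (hfM x hx) (by positivity)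
  have hmass : a⁻¹ - b⁻¹ ≤ 1 := by
    have : -1 ≤ b⁻¹ := by
      rw [le_inv_of_neg (by norm_num) (by linarith)]; simpa using hb
    linarith [inv_lt_zero.mpr (hneg a ⟨le_rfl, hab⟩)]
  calc ∫ x in a..b, ((-x) ^ 2)⁻¹ * f x ≤ ∫ x in a..b, ((-x) ^ 2)⁻¹ * M := hwM
    _ = (a⁻¹ - b⁻¹) * M := by
      rw [integral_mul_const, integral_inv_neg_sq_of_neg (hneg a ⟨le_rfl, hab⟩) (by linarith)]
    _ ≤ M := mul_le_of_le_one_left hM hmass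

theorem sq_mul_add_inv_mul_le {δ D Dbar A B : ℝ} (hδ : 0 < δ) (hδ1 : δ ≤ 1)
    (hDbar : 0 ≤ Dbar) (hA : 0 ≤ A) :
    δ ^ 2 * (D + δ⁻¹ * Dbar + δ⁻¹ * A + B) ≤ Dbar + δ ^ 2 * D + A + δ ^ 2 * B := by
  have h : δ ^ 2 * (D + δ⁻¹ * Dbar + δ⁻¹ * A + B) =
      δ * Dbar + δ ^ 2 * D + δ * A + δ ^ 2 * B := by
    field_simp
    ring
  rw [h]
  gcongr <;> exact mul_le_of_le_one_left ‹_› hδ1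

/-- **Coupling of the two energy inequalities for the multipliers `K₀` and `K₁`.**
If on `[-r₀, tmax] × [0, δ]` (with `tmax ≤ -1`, `0 < δ ≤ 1`) the energies satisfy
`Ē + F̄ + K ≤ D̄ + A + C δ² ∫_{-r₀}^t (-t')⁻² E dt'` and
`E + F ≤ D + δ⁻¹ D̄ + δ⁻¹ A + B`, then
`E ≤ C'(D + δ⁻¹ D̄ + δ⁻¹ A + B)` and `Ē + F̄ + K ≤ C'(D̄ + δ² D + A + δ² B)`
for a constant `C'` depending only on `C` (in particular independent of `r₀`). -/
theorem coupled_energy_estimates (C : ℝ) (hC : 0 ≤ C) :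
    ∃ C' : ℝ, 0 < C' ∧
      ∀ (r₀ δ tmax : ℝ) (E Ebar F Fbar K : ℝ → ℝ → ℝ) (A B D Dbar : ℝ),
        0 < δ → δ ≤ 1 → 0 < r₀ → -r₀ ≤ tmax → tmax ≤ -1 →
        0 ≤ A → 0 ≤ B → 0 ≤ D → 0 ≤ Dbar →
        (∀ u ∈ Set.Icc (0 : ℝ) δ, ∀ t ∈ Set.Icc (-r₀) tmax,
          0 ≤ E t u ∧ 0 ≤ Ebar t u ∧ 0 ≤ F t u ∧ 0 ≤ Fbar t u ∧ 0 ≤ K t u) →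
        (∀ u ∈ Set.Icc (0 : ℝ) δ,
          ContinuousOn (fun t => E t u) (Set.Icc (-r₀) tmax)) →
        (∀ u ∈ Set.Icc (0 : ℝ) δ, ∀ t ∈ Set.Icc (-r₀) tmax,
          Ebar t u + Fbar t u + K t u ≤
            Dbar + A + C * δ ^ 2 * ∫ t' in (-r₀)..t, ((-t') ^ 2)⁻¹ * E t' u) →
        (∀ u ∈ Set.Icc (0 : ℝ) δ, ∀ t ∈ Set.Icc (-r₀) tmax,
          E t u + F t u ≤ D + δ⁻¹ * Dbar + δ⁻¹ * A + B) →
        ∀ u ∈ Set.Icc (0 : ℝ) δ, ∀ t ∈ Set.Icc (-r₀) tmax,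
          E t u ≤ C' * (D + δ⁻¹ * Dbar + δ⁻¹ * A + B) ∧
          Ebar t u + Fbar t u + K t u ≤
            C' * (Dbar + δ ^ 2 * D + A + δ ^ 2 * B) := by
  refine ⟨C + 1, by linarith, ?_⟩
  intro r₀ δ tmax E Ebar F Fbar K A B D Dbar hδ hδ1 _ _ ht1 hA hB hD hDbar
    hnonneg hcont hK₁ hK₀ u hu t ht
  set M := D + δ⁻¹ * Dbar + δ⁻¹ * A + B
  have hM : 0 ≤ M := by positivity
  have hEM : ∀ t' ∈ Icc (-r₀) tmax, E t' u ≤ M := fun t' ht' => by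
    linarith [hK₀ u hu t' ht', (hnonneg u hu t' ht').2.2.1]
  have hIcc : Icc (-r₀) t ⊆ Icc (-r₀) tmax := Icc_subset_Icc_right ht.2
  have hint : ∫ t' in (-r₀)..t, ((-t') ^ 2)⁻¹ * E t' u ≤ M :=
    integral_inv_neg_sq_mul_le ht.1 (ht.2.trans ht1) ((hcont u hu).mono hIcc)
      (fun t' ht' => hEM t' (hIcc ht')) hM
  refine ⟨(hEM t ht).trans (le_mul_of_one_le_left hM (by linarith)), ?_⟩
  calc Ebar t u + Fbar t u + K t u
      ≤ Dbar + A + C * (δ ^ 2 * M) := by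
        linarith [hK₁ u hu t ht, mul_le_mul_of_nonneg_left hint (by positivity : 0 ≤ C * δ ^ 2)]
    _ ≤ Dbar + A + C * (Dbar + δ ^ 2 * D + A + δ ^ 2 * B) := by
        gcongr; exact sq_mul_add_inv_mul_le hδ hδ1 hDbar hA
    _ ≤ (C + 1) * (Dbar + δ ^ 2 * D + A + δ ^ 2 * B) := by
        linarith [mul_nonneg (sq_nonneg δ) hD, mul_nonneg (sq_nonneg δ) hB]
end
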